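/- arXiv:math/0504118 — 2 statements merged into one kernel-verified Lean document; each statement's English description precedes it below -/
import Mathlib

section
/- Fix a real number β with 1/2 < β < 1 and an integer t ≥ 5. Then the number of integers n with e^{t−1} < n ≤ e^t such that Z(n) < n^β is at most 196 · t² · e^{βt}. -/
/-- The m-th triangular number. -/
def T (m : ℕ) : ℕ := m * (m + 1) / 2

/-- The pseudo-Smarandache function: the least positive m with n ∣ T m. -/
noncomputable def Z (n : ℕ) : ℕ := sInf {m : ℕ | 0 < m ∧ n ∣ T m}

/-!
If `m = Z n`, then `n * c = m * (m + 1)` for a cofactor `c`, and `c = a * b` with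
`a = gcd c m ∣ m` and `b = gcd c (m + 1) ∣ m + 1`; the triple `(a, b, m)` determines `n`.
For `e^(t-1) < n ≤ e^t` with `Z n < n^β`, both `m` and `a * b` are at most `X = e^(βt + 2)`.
For fixed `a, b`, the `m ≤ X` with `a ∣ m` and `b ∣ m + 1` lie in one residue class modulo `a * b`
(Chinese remainder theorem), so there are at most `X / (a b) + 1 ≤ 2 X / (a b)` of them.
Summing over `a, b ≤ X` gives at most `2 X (1 + log X)^2 = O(t^2 e^(βt))` triples.
-/

open Finset

lemma two_mul_T (m : ℕ) : 2 * T m = m * (m + 1) :=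
  Nat.mul_div_cancel' (Nat.even_mul_succ_self m).two_dvd

lemma Z_spec {n : ℕ} (hn : 0 < n) : 0 < Z n ∧ n ∣ T (Z n) := by
  refine Nat.sInf_mem (s := {m | 0 < m ∧ n ∣ T m}) ⟨2 * n - 1, by omega, 2 * n - 1, ?_⟩
  apply Nat.eq_of_mul_eq_mul_left two_pos
  rw [two_mul_T, Nat.sub_add_cancel (by omega)]
  ring

lemma gcd_mul_gcd_succ_eq {c m : ℕ} (h : c ∣ m * (m + 1)) :
    Nat.gcd c m * Nat.gcd c (m + 1) = c := by
  rw [← Nat.Coprime.gcd_mul c (Nat.coprime_self_add_right.mpr (Nat.coprime_one_right m)),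
    Nat.gcd_eq_left h]

section Counting

lemma card_le_div_add_one_of_modEq {s : Finset ℕ} {q M : ℕ}
    (hM : ∀ x ∈ s, x ≤ M) (hmod : ∀ x ∈ s, ∀ y ∈ s, x ≡ y [MOD q]) : #s ≤ M / q + 1 := by
  calc #s ≤ #(range (M / q + 1)) := by
        refine card_le_card_of_injOn (· / q) (fun x hx => ?_) (fun x hx y hy hxy => ?_)
        · simpa [Nat.lt_succ_iff] using Nat.div_le_div_right (hM x hx)
        · rw [← Nat.div_add_mod x q, ← Nat.div_add_mod y q]
          simp only at hxy
          rw [hxy, hmod x hx y hy]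
    _ = M / q + 1 := card_range _

lemma card_filter_dvd_dvd_succ_le (a b M : ℕ) :
    #{m ∈ range (M + 1) | a ∣ m ∧ b ∣ m + 1} ≤ M / (a * b) + 1 := by
  refine card_le_div_add_one_of_modEq (fun x hx => ?_) (fun x hx y hy => ?_)
  · simpa [Nat.lt_succ_iff] using (mem_filter.mp hx).1
  · obtain ⟨-, hax, hbx⟩ := mem_filter.mp hx
    obtain ⟨-, hay, hby⟩ := mem_filter.mp hy
    have hab : Nat.Coprime a b := Nat.Coprime.of_dvd hax hbx
      (Nat.coprime_self_add_right.mpr (Nat.coprime_one_right x))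
    refine (Nat.modEq_and_modEq_iff_modEq_mul hab).mp ⟨?_, ?_⟩
    · exact (Nat.modEq_zero_iff_dvd.mpr hax).trans (Nat.modEq_zero_iff_dvd.mpr hay).symm
    · exact Nat.ModEq.add_right_cancel' 1
        ((Nat.modEq_zero_iff_dvd.mpr hbx).trans (Nat.modEq_zero_iff_dvd.mpr hby).symm)

lemma sum_Icc_inv_le_one_add_log (D : ℕ) : ∑ a ∈ Icc 1 D, (a : ℝ)⁻¹ ≤ 1 + Real.log D := by
  simpa [harmonic_eq_sum_Icc] using harmonic_le_one_add_log D

def factorTriples (M D : ℕ) : Finset ((ℕ × ℕ) × ℕ) :=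
  {x ∈ {p ∈ Icc 1 D ×ˢ Icc 1 D | p.1 * p.2 ≤ D} ×ˢ range (M + 1) | x.1.1 ∣ x.2 ∧ x.1.2 ∣ x.2 + 1}

lemma card_factorTriples_le (M D : ℕ) :
    (#(factorTriples M D) : ℝ) ≤ (M + D) * (1 + Real.log D) ^ 2 := by
  set P := {p ∈ Icc 1 D ×ˢ Icc 1 D | p.1 * p.2 ≤ D}
  have hfiber : #(factorTriples M D) =
      ∑ p ∈ P, #{m ∈ range (M + 1) | p.1 ∣ m ∧ p.2 ∣ m + 1} := by
    simp only [factorTriples, card_filter, sum_product, P]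
  have hterm : ∀ p ∈ P, (#{m ∈ range (M + 1) | p.1 ∣ m ∧ p.2 ∣ m + 1} : ℝ)
      ≤ (M + D) * ((p.1 : ℝ)⁻¹ * (p.2 : ℝ)⁻¹) := by
    intro p hp
    simp only [P, mem_filter, mem_product, mem_Icc] at hp
    obtain ⟨⟨⟨ha, -⟩, hb, -⟩, habD⟩ := hp
    have hab : (0 : ℝ) < p.1 * p.2 := by positivity
    have hone : (1 : ℝ) ≤ D / (p.1 * p.2) := by
      rw [le_div_iff₀ hab, one_mul]; exact_mod_cast habD
    calc (#{m ∈ range (M + 1) | p.1 ∣ m ∧ p.2 ∣ m + 1} : ℝ)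
        ≤ ((M / (p.1 * p.2) + 1 : ℕ) : ℝ) := by exact_mod_cast card_filter_dvd_dvd_succ_le _ _ _
      _ ≤ M / (p.1 * p.2) + D / (p.1 * p.2) := by
        push_cast
        gcongr
        exact_mod_cast Nat.cast_div_le (α := ℝ)
      _ = (M + D) * ((p.1 : ℝ)⁻¹ * (p.2 : ℝ)⁻¹) := by field_simp
  calc (#(factorTriples M D) : ℝ)
      ≤ ∑ p ∈ P, (M + D) * ((p.1 : ℝ)⁻¹ * (p.2 : ℝ)⁻¹) := by
        rw [hfiber]; push_cast; exact sum_le_sum hterm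
    _ ≤ ∑ p ∈ Icc 1 D ×ˢ Icc 1 D, (M + D) * ((p.1 : ℝ)⁻¹ * (p.2 : ℝ)⁻¹) :=
        sum_le_sum_of_subset_of_nonneg (filter_subset _ _) fun _ _ _ => by positivity
    _ = (M + D) * (∑ a ∈ Icc 1 D, (a : ℝ)⁻¹) ^ 2 := by
        rw [← mul_sum, sum_product, sq, sum_mul_sum]
    _ ≤ (M + D) * (1 + Real.log D) ^ 2 := by
        gcongr
        exact sum_Icc_inv_le_one_add_log D

end Counting

section Cofactor

noncomputable def cofactor (n : ℕ) : ℕ := Z n * (Z n + 1) / n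

lemma mul_cofactor {n : ℕ} (hn : 0 < n) : n * cofactor n = Z n * (Z n + 1) :=
  Nat.mul_div_cancel' ((Z_spec hn).2.trans (Dvd.intro_left 2 (two_mul_T _)))

lemma cofactor_pos {n : ℕ} (hn : 0 < n) : 0 < cofactor n :=
  Nat.pos_of_mul_pos_left ((mul_cofactor hn).symm ▸ Nat.mul_pos (Z_spec hn).1 (Nat.succ_pos _))

lemma gcd_mul_gcd_cofactor {n : ℕ} (hn : 0 < n) :
    Nat.gcd (cofactor n) (Z n) * Nat.gcd (cofactor n) (Z n + 1) = cofactor n :=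
  gcd_mul_gcd_succ_eq ⟨n, by rw [← mul_cofactor hn, mul_comm]⟩

noncomputable def zSplit (n : ℕ) : (ℕ × ℕ) × ℕ :=
  ((Nat.gcd (cofactor n) (Z n), Nat.gcd (cofactor n) (Z n + 1)), Z n)

lemma zSplit_injOn : Set.InjOn zSplit {n | 0 < n} := by
  intro n₁ hn₁ n₂ hn₂ h
  simp only [zSplit, Prod.mk.injEq] at h
  obtain ⟨⟨ha, hb⟩, hZ⟩ := h
  have hc : cofactor n₁ = cofactor n₂ := by
    rw [← gcd_mul_gcd_cofactor hn₁, ← gcd_mul_gcd_cofactor hn₂, ha, hb]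
  refine Nat.eq_of_mul_eq_mul_right (cofactor_pos hn₁) ?_
  rw [mul_cofactor hn₁, hc, mul_cofactor hn₂, hZ]

lemma zSplit_mem_factorTriples {n M D : ℕ} (hn : 0 < n) (hZ : Z n ≤ M) (hc : cofactor n ≤ D) :
    zSplit n ∈ factorTriples M D := by
  have hc₀ := cofactor_pos hn
  simp only [zSplit, factorTriples, mem_filter, mem_product, mem_Icc, mem_range]
  refine ⟨⟨⟨⟨⟨Nat.gcd_pos_of_pos_left _ hc₀, (Nat.gcd_le_left _ hc₀).trans hc⟩,
    Nat.gcd_pos_of_pos_left _ hc₀, (Nat.gcd_le_left _ hc₀).trans hc⟩,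
    (gcd_mul_gcd_cofactor hn).symm ▸ hc⟩, by omega⟩, Nat.gcd_dvd_right _ _, Nat.gcd_dvd_right _ _⟩

lemma ncard_le_card_factorTriples {s : Set ℕ} {M D : ℕ}
    (hs : ∀ n ∈ s, 0 < n ∧ Z n ≤ M ∧ cofactor n ≤ D) : s.ncard ≤ #(factorTriples M D) := by
  rw [← Set.ncard_coe_finset]
  exact Set.ncard_le_ncard_of_injOn zSplit
    (fun n hn => zSplit_mem_factorTriples (hs n hn).1 (hs n hn).2.1 (hs n hn).2.2)
    (zSplit_injOn.mono fun n hn => (hs n hn).1)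

lemma cofactor_le_exp {n : ℕ} {β t : ℝ} (hβ : β ≤ 1) (ht : 0 ≤ t) (hn : Real.exp (t - 1) < n)
    (hZ : (Z n : ℝ) ≤ Real.exp (β * t)) : (cofactor n : ℝ) ≤ Real.exp (β * t + 2) := by
  have hn₀ : 0 < n := by exact_mod_cast (Real.exp_pos _).trans hn
  set E := Real.exp (β * t)
  have hZ₁ : (1 : ℝ) ≤ Z n := by exact_mod_cast (Z_spec hn₀).1
  have hprod : (n : ℝ) * cofactor n ≤ 2 * E ^ 2 := by
    have := congrArg (Nat.cast (R := ℝ)) (mul_cofactor hn₀)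
    push_cast at this
    rw [this]; nlinarith
  have h2E : 2 * E ≤ Real.exp (t + 1) := by
    have he : (2 : ℝ) ≤ Real.exp 1 := by linarith [Real.add_one_le_exp 1]
    calc 2 * E ≤ Real.exp 1 * Real.exp t := by
          gcongr
          exact Real.exp_le_exp.mpr (by nlinarith)
      _ = Real.exp (t + 1) := by rw [← Real.exp_add, add_comm]
  have hsplit : Real.exp (β * t + 2) * Real.exp (t - 1) = E * Real.exp (t + 1) := by
    rw [← Real.exp_add, ← Real.exp_add]; ring_nf
  have hc₀ : (0 : ℝ) ≤ cofactor n := Nat.cast_nonneg _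
  refine le_of_mul_le_mul_right ?_ (Real.exp_pos (t - 1))
  rw [hsplit]
  nlinarith [Real.exp_pos (β * t)]

end Cofactor

lemma floor_mul_one_add_log_floor_sq_le {x : ℝ} (hx : 1 ≤ x) :
    (⌊x⌋₊ : ℝ) * (1 + Real.log ⌊x⌋₊) ^ 2 ≤ x * (1 + Real.log x) ^ 2 := by
  have hN : (1 : ℝ) ≤ ⌊x⌋₊ := by exact_mod_cast Nat.one_le_floor_iff _ |>.mpr hx
  have hNx : (⌊x⌋₊ : ℝ) ≤ x := Nat.floor_le (by linarith)
  have hlog : 0 ≤ Real.log ⌊x⌋₊ := Real.log_nonneg hN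
  gcongr

theorem stmt_17 (β : ℝ) (hβ1 : 1 / 2 < β) (hβ2 : β < 1) (t : ℕ) (ht : 5 ≤ t) :
    ({n : ℕ | Real.exp (t - 1 : ℝ) < n ∧ (n : ℝ) ≤ Real.exp t ∧ (Z n : ℝ) < (n : ℝ) ^ β}.ncard : ℝ)
      ≤ 196 * t ^ 2 * Real.exp (β * t) := by
  have ht' : (5 : ℝ) ≤ t := by exact_mod_cast ht
  set X := Real.exp (β * t + 2)
  have hX : 1 ≤ X := Real.one_le_exp (by positivity)
  have hZ : ∀ n : ℕ, (n : ℝ) ≤ Real.exp t → (Z n : ℝ) < (n : ℝ) ^ β →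
      (Z n : ℝ) ≤ Real.exp (β * t) := fun n hn hZ =>
    calc (Z n : ℝ) ≤ (n : ℝ) ^ β := hZ.le
      _ ≤ Real.exp t ^ β := by gcongr
      _ = Real.exp (β * t) := by rw [← Real.exp_mul, mul_comm]
  have he : Real.exp 2 ≤ 9 := by
    rw [show (2 : ℝ) = 1 + 1 by norm_num, Real.exp_add]
    nlinarith [Real.exp_one_lt_d9, Real.exp_pos 1]
  calc _ ≤ (#(factorTriples ⌊X⌋₊ ⌊X⌋₊) : ℝ) := by
        refine Nat.cast_le.mpr (ncard_le_card_factorTriples fun n hn => ?_)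
        obtain ⟨hlo, hhi, hlt⟩ := hn
        refine ⟨by exact_mod_cast (Real.exp_pos _).trans hlo, ?_, ?_⟩
        · exact Nat.le_floor ((hZ n hhi hlt).trans (Real.exp_le_exp.mpr (by linarith)))
        · exact Nat.le_floor (cofactor_le_exp hβ2.le (by positivity) hlo (hZ n hhi hlt))
    _ ≤ 2 * (⌊X⌋₊ * (1 + Real.log ⌊X⌋₊) ^ 2) := by
        linarith [card_factorTriples_le ⌊X⌋₊ ⌊X⌋₊]
    _ ≤ 2 * (X * (1 + Real.log X) ^ 2) :=
        mul_le_mul_of_nonneg_left (floor_mul_one_add_log_floor_sq_le hX) two_pos.le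
    _ = 2 * Real.exp 2 * (β * t + 3) ^ 2 * Real.exp (β * t) := by
        rw [Real.log_exp]; simp only [X, Real.exp_add]; ring
    _ ≤ 2 * 9 * (2 * t) ^ 2 * Real.exp (β * t) := by
        gcongr
        nlinarith
    _ ≤ 196 * t ^ 2 * Real.exp (β * t) := by nlinarith [Real.exp_pos (β * t)]
end

section
/- For every real number α > 1, the series ∑_{n=1}^{∞} 1/Z(n)^α is convergent. -/
/-!
If `m = Z n` then `n ∣ m (m + 1)`, and since `m` and `m + 1` are coprime, `n = a b` with
`a = gcd n m ∣ m` and `b = gcd n (m + 1) ∣ m + 1`. Hence `n ↦ (m, a, b)` is injective and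
`∑ Z(n)^{-α} ≤ ∑ₘ d(m) d(m+1) m^{-α} ≤ ∑ₘ d(m)² m^{-α} + 2^α ∑ₘ d(m+1)² (m+1)^{-α}`.
Finally `d(m)²` counts pairs `(a, b)` of divisors of `m`, and `(a, b) ↦ (g, a/g, b/g, m/lcm a b)`
with `g = gcd a b` injects them into factorisations of `m` into four factors, so
`∑ d(m)² m^{-α} ≤ ζ(α)⁴`.
-/

open Finset Function

lemma summable_sigma_finset_iff {ι γ : Type*} {s : ι → Finset γ} {f : ι → ℝ}
    (hf : ∀ i, 0 ≤ f i) :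
    Summable (fun x : Σ i, s i => f x.1) ↔ Summable fun i => (#(s i) : ℝ) * f i := by
  rw [summable_sigma_of_nonneg fun x => hf x.1]
  simp only [tsum_fintype, sum_const, card_univ, Fintype.card_coe, nsmul_eq_mul]
  exact and_iff_right fun i => (hasSum_fintype _).summable

lemma rpow_neg_le_two_rpow_mul_succ {α : ℝ} (hα : 0 < α) (m : ℕ) :
    (m : ℝ) ^ (-α) ≤ 2 ^ α * ((m + 1 : ℕ) : ℝ) ^ (-α) := by
  rcases Nat.eq_zero_or_pos m with rfl | hm
  · rw [Nat.cast_zero, Real.zero_rpow (neg_ne_zero.mpr hα.ne')]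
    positivity
  have hm' : (1 : ℝ) ≤ m := by exact_mod_cast hm
  calc (m : ℝ) ^ (-α) ≤ (((m + 1 : ℕ) : ℝ) / 2) ^ (-α) :=
        Real.rpow_le_rpow_of_nonpos (by positivity) (by push_cast; linarith) (by linarith)
    _ = 2 ^ α * ((m + 1 : ℕ) : ℝ) ^ (-α) := by
        rw [Real.div_rpow (by positivity) (by norm_num), Real.rpow_neg (by norm_num : (0 : ℝ) ≤ 2),
          div_inv_eq_mul, mul_comm]

lemma summable_rpow_prod_four {α : ℝ} (hα : 1 < α) :
    Summable fun x : ℕ × ℕ × ℕ × ℕ =>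
      (x.1 : ℝ) ^ (-α) * ((x.2.1 : ℝ) ^ (-α) * ((x.2.2.1 : ℝ) ^ (-α) * (x.2.2.2 : ℝ) ^ (-α))) := by
  have h : Summable fun n : ℕ => (n : ℝ) ^ (-α) := Real.summable_nat_rpow.mpr (by linarith)
  have h0 : 0 ≤ fun n : ℕ => (n : ℝ) ^ (-α) := fun n => by positivity
  exact h.mul_of_nonneg (h.mul_of_nonneg (h.mul_of_nonneg h h0 h0) h0 fun _ => by positivity)
    h0 fun _ => by positivity

lemma Nat.gcd_mul_div_gcd_mul_div_gcd (a b : ℕ) :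
    a.gcd b * (a / a.gcd b) * (b / a.gcd b) = a.lcm b := by
  rw [Nat.mul_div_cancel' (a.gcd_dvd_left b), Nat.lcm, Nat.mul_div_assoc _ (a.gcd_dvd_right b)]

def divisorPairSplit (x : Σ m : ℕ, ↥(m.divisors ×ˢ m.divisors)) : ℕ × ℕ × ℕ × ℕ :=
  let a := x.2.1.1
  let b := x.2.1.2
  (a.gcd b, a / a.gcd b, b / a.gcd b, x.1 / a.lcm b)

lemma divisorPairSplit_prod (x : Σ m : ℕ, ↥(m.divisors ×ˢ m.divisors)) :
    let y := divisorPairSplit x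
    y.1 * y.2.1 * y.2.2.1 * y.2.2.2 = x.1 := by
  obtain ⟨m, ⟨a, b⟩, hab⟩ := x
  simp only [mem_product, Nat.mem_divisors] at hab
  simp only [divisorPairSplit]
  rw [Nat.gcd_mul_div_gcd_mul_div_gcd, Nat.mul_div_cancel' (Nat.lcm_dvd hab.1.1 hab.2.1)]

lemma divisorPairSplit_injective : Injective divisorPairSplit := by
  rintro ⟨m, ⟨a, b⟩, hab⟩ ⟨m', ⟨a', b'⟩, hab'⟩ h
  have hm := divisorPairSplit_prod ⟨m, ⟨a, b⟩, hab⟩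
  have hm' := divisorPairSplit_prod ⟨m', ⟨a', b'⟩, hab'⟩
  simp only [divisorPairSplit, Prod.mk.injEq] at h hm hm'
  obtain ⟨hg, ha, hb, hl⟩ := h
  obtain rfl : a = a' := by
    rw [← Nat.mul_div_cancel' (a.gcd_dvd_left b), ← Nat.mul_div_cancel' (a'.gcd_dvd_left b'), ha, hg]
  obtain rfl : b = b' := by
    rw [← Nat.mul_div_cancel' (a.gcd_dvd_right b), ← Nat.mul_div_cancel' (a.gcd_dvd_right b'), hb, hg]
  exact Sigma.subtype_ext (hm.symm.trans (hl ▸ hm')) rfl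

lemma summable_card_divisors_sq_mul_rpow {α : ℝ} (hα : 1 < α) :
    Summable fun m : ℕ => (#(m.divisors ×ˢ m.divisors) : ℝ) * (m : ℝ) ^ (-α) := by
  rw [← summable_sigma_finset_iff fun m => by positivity]
  refine ((summable_rpow_prod_four hα).comp_injective divisorPairSplit_injective).congr fun x => ?_
  simp only [comp_apply, ← divisorPairSplit_prod x, Nat.cast_mul]
  rw [Real.mul_rpow (by positivity) (by positivity), Real.mul_rpow (by positivity) (by positivity),
    Real.mul_rpow (by positivity) (by positivity)]
  ring

lemma summable_card_divisors_mul_succ_mul_rpow {α : ℝ} (hα : 1 < α) :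
    Summable fun m : ℕ => (#(m.divisors ×ˢ (m + 1).divisors) : ℝ) * (m : ℝ) ^ (-α) := by
  have hsq := summable_card_divisors_sq_mul_rpow hα
  refine Summable.of_nonneg_of_le (fun m => by positivity) (fun m => ?_)
    (hsq.add (((summable_nat_add_iff 1).mpr hsq).mul_left (2 ^ α)))
  simp only [card_product, Nat.cast_mul]
  set A := (#m.divisors : ℝ)
  set B := (#(m + 1).divisors : ℝ)
  have hx : 0 ≤ (m : ℝ) ^ (-α) := by positivity
  have hxy := rpow_neg_le_two_rpow_mul_succ (by linarith : (0 : ℝ) < α) m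
  have hAB : A * B ≤ A * A + B * B := by nlinarith [two_mul_le_add_sq A B]
  nlinarith [mul_le_mul_of_nonneg_right hAB hx, mul_le_mul_of_nonneg_left hxy (mul_self_nonneg B)]

lemma T_two_mul (n : ℕ) : T (2 * n) = n * (2 * n + 1) := by
  rw [T, show 2 * n * (2 * n + 1) = n * (2 * n + 1) * 2 by ring, Nat.mul_div_cancel _ two_pos]

lemma T_dvd_mul_succ (m : ℕ) : T m ∣ m * (m + 1) :=
  Nat.div_dvd_of_dvd (Nat.even_mul_succ_self m).two_dvd

lemma Z_pos_and_dvd_T {n : ℕ} (hn : n ≠ 0) : 0 < Z n ∧ n ∣ T (Z n) :=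
  Nat.sInf_mem (s := {m | 0 < m ∧ n ∣ T m})
    ⟨2 * n, by omega, by rw [T_two_mul]; exact dvd_mul_right n _⟩

lemma Nat.gcd_mul_gcd_succ_of_dvd {n m : ℕ} (h : n ∣ m * (m + 1)) :
    n.gcd m * n.gcd (m + 1) = n := by
  rw [← Nat.Coprime.gcd_mul n (Nat.coprime_self_add_right.mpr (Nat.coprime_one_right m)),
    Nat.gcd_eq_left h]

noncomputable def splitZ (n : ℕ) : Σ m : ℕ, ↥(m.divisors ×ˢ (m + 1).divisors) :=
  ⟨Z (n + 1), ((n + 1).gcd (Z (n + 1)), (n + 1).gcd (Z (n + 1) + 1)), by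
    simp only [mem_product, Nat.mem_divisors]
    exact ⟨⟨Nat.gcd_dvd_right _ _, (Z_pos_and_dvd_T n.succ_ne_zero).1.ne'⟩,
      Nat.gcd_dvd_right _ _, Nat.succ_ne_zero _⟩⟩

lemma splitZ_injective : Injective splitZ := by
  intro n n' h
  have hprod (k : ℕ) : (splitZ k).2.1.1 * (splitZ k).2.1.2 = k + 1 :=
    Nat.gcd_mul_gcd_succ_of_dvd ((Z_pos_and_dvd_T k.succ_ne_zero).2.trans (T_dvd_mul_succ _))
  have := hprod n
  rw [h, hprod n'] at this
  omega

theorem stmt_19 (α : ℝ) (hα : 1 < α) :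
    Summable (fun n : ℕ => 1 / (Z (n + 1) : ℝ) ^ α) := by
  have hS : Summable fun x : Σ m : ℕ, ↥(m.divisors ×ˢ (m + 1).divisors) => (x.1 : ℝ) ^ (-α) :=
    (summable_sigma_finset_iff fun m => by positivity).mpr
      (summable_card_divisors_mul_succ_mul_rpow hα)
  refine (hS.comp_injective splitZ_injective).congr fun n => ?_
  simp [splitZ, Real.rpow_neg]
end
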